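/- Mutually consistent sets do not cross: let U, W ⊆ V be sets such that U is consistent with W and W is consistent with U (i.e., if U ∩ W ≠ ∅ then δ(U \ W) > δ(U), and if U ∩ W ≠ ∅ then δ(W \ U) > δ(W)). Then U and W do not cross: U ∩ W = ∅, or U ⊆ W, or W ⊆ U. In particular, for arbitrary sets U, W ⊆ V, always δ(U \ W) ≤ δ(U) or δ(W \ U) ≤ δ(W). -/
import Mathlib


open Finset

/-- The cut value of a set `X` in a weighted undirected graph on vertex set `V`
with edge-weight function `w`: the total weight of edges with exactly one
endpoint in `X`. -/
def cutVal {V : Type*} [Fintype V] [DecidableEq V] (w : V → V → ℝ) (X : Finset V) : ℝ :=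
  ∑ u ∈ X, ∑ v ∈ Xᶜ, w u v

private def cutTerm {V : Type*} [DecidableEq V] (w : V → V → ℝ) (X : Finset V) (u v : V) : ℝ :=
  if u ∈ X ∧ v ∉ X then w u v else 0

private lemma cutVal_eq_sum {V : Type*} [Fintype V] [DecidableEq V] (w : V → V → ℝ)
    (X : Finset V) : cutVal w X = ∑ u, ∑ v, cutTerm w X u v := by
  unfold cutVal cutTerm
  rw [← Finset.sum_subset (Finset.subset_univ X)]
  · refine Finset.sum_congr rfl fun u hu => ?_
    rw [← Finset.sum_subset (Finset.subset_univ Xᶜ)]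
    · refine Finset.sum_congr rfl fun v hv => ?_
      simp [Finset.mem_compl.mp hv, hu]
    · intro v _ hv
      simp [Finset.mem_compl] at hv
      simp [hu, hv]
  · intro u _ hu
    apply Finset.sum_eq_zero
    intro v _
    simp [hu]

private lemma posimodular {V : Type*} [Fintype V] [DecidableEq V] (w : V → V → ℝ)
    (hsymm : ∀ u v, w u v = w v u) (hnonneg : ∀ u v, 0 ≤ w u v)
    (U W : Finset V) :
    cutVal w (U \ W) + cutVal w (W \ U) ≤ cutVal w U + cutVal w W := by
  set F : V → V → ℝ := fun u v =>
    cutTerm w U u v + cutTerm w W u v - cutTerm w (U \ W) u v - cutTerm w (W \ U) u v with hF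
  have hpt : ∀ u v, 0 ≤ F u v + F v u := by
    intro u v
    simp only [hF, cutTerm]
    by_cases h1 : u ∈ U <;> by_cases h2 : u ∈ W <;> by_cases h3 : v ∈ U <;>
      by_cases h4 : v ∈ W <;>
      simp [Finset.mem_sdiff, h1, h2, h3, h4, hsymm u v] <;>
      linarith [hnonneg u v, hnonneg v u, hsymm u v]
  have hS : 0 ≤ ∑ u, ∑ v, F u v := by
    have hswap : (∑ u, ∑ v, F u v) = ∑ u, ∑ v, F v u := Finset.sum_comm
    have h2 : 0 ≤ ∑ u, ∑ v, (F u v + F v u) := by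
      refine Finset.sum_nonneg fun u _ => Finset.sum_nonneg fun v _ => hpt u v
    have : (∑ u, ∑ v, (F u v + F v u)) = (∑ u, ∑ v, F u v) + ∑ u, ∑ v, F v u := by
      simp [Finset.sum_add_distrib]
    nlinarith [hswap, h2, this]
  have hexp : (∑ u, ∑ v, F u v) =
      cutVal w U + cutVal w W - cutVal w (U \ W) - cutVal w (W \ U) := by
    simp only [hF, cutVal_eq_sum, Finset.sum_sub_distrib, Finset.sum_add_distrib]
  linarith [hS, hexp.symm.le, hexp.le]

theorem consistent_sets_uncross {V : Type*} [Fintype V] [DecidableEq V] (w : V → V → ℝ)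
    (hsymm : ∀ u v, w u v = w v u) (hnonneg : ∀ u v, 0 ≤ w u v)
    (hdiag : ∀ v, w v v = 0)
    (U W : Finset V)
    (hUW : (U ∩ W).Nonempty → cutVal w (U \ W) > cutVal w U)
    (hWU : (U ∩ W).Nonempty → cutVal w (W \ U) > cutVal w W) :
    (U ∩ W = ∅ ∨ U ⊆ W ∨ W ⊆ U) ∧
      ∀ U' W' : Finset V,
        cutVal w (U' \ W') ≤ cutVal w U' ∨ cutVal w (W' \ U') ≤ cutVal w W' := by
  have main : ∀ U' W' : Finset V,
      cutVal w (U' \ W') ≤ cutVal w U' ∨ cutVal w (W' \ U') ≤ cutVal w W' := by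
    intro U' W'
    by_contra h
    push_neg at h
    have := posimodular w hsymm hnonneg U' W'
    linarith [h.1, h.2]
  refine ⟨?_, main⟩
  by_cases hne : (U ∩ W).Nonempty
  · exfalso
    rcases main U W with h | h
    · linarith [hUW hne]
    · linarith [hWU hne]
  · left
    exact Finset.not_nonempty_iff_eq_empty.mp hne
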